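/- arXiv:1908.04037 — 3 statements merged into one kernel-verified Lean document; each statement's English description precedes it below -/
import Mathlib

section
/- For m ≥ 1, the characteristic polynomial of the Laplacian matrix of the path graph on m vertices equals x·U_{m−1}(x/2 − 1), where U_{m−1} is the Chebyshev polynomial of the second kind of degree m−1. -/
open Polynomial Matrix


noncomputable def gg (i j : ℕ) : ℝ[X] :=
  if i = j then (if i = 0 then X - 1 else X - 2)
  else if i + 1 = j ∨ j + 1 = i then 1 else 0

noncomputable def Qmat (n : ℕ) : Matrix (Fin n) (Fin n) ℝ[X] :=
  Matrix.of fun i j => gg i.val j.val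

noncomputable def qq (n : ℕ) : ℝ[X] := (Qmat n).det

noncomputable def uu (n : ℤ) : ℝ[X] :=
  (Polynomial.Chebyshev.U ℝ n).comp (C (2 : ℝ)⁻¹ * X - 1)

lemma two_mul_arg : (2 : ℝ[X]) * (C (2 : ℝ)⁻¹ * X - 1) = X - 2 := by
  rw [show (2 : ℝ[X]) = C 2 from by simp only [map_ofNat], mul_sub, ← mul_assoc, ← C_mul]
  norm_num

lemma uu_rec (n : ℤ) : uu (n + 2) = (X - 2) * uu (n + 1) - uu n := by
  unfold uu
  rw [Polynomial.Chebyshev.U_add_two, sub_comp, mul_comp, mul_comp, ofNat_comp, X_comp,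
    ← two_mul_arg]
  ring

lemma qq_zero : qq 0 = 1 := by simp [qq, Matrix.det_fin_zero]

lemma qq_one : qq 1 = X - 1 := by
  simp [qq, Matrix.det_fin_one, Qmat, gg]

lemma submatrix_last_last (n : ℕ) :
    (Qmat (n+2)).submatrix (Fin.last (n+1)).succAbove (Fin.last (n+1)).succAbove
      = Qmat (n+1) := by
  ext i j
  simp [Qmat, Fin.succAbove_last]

lemma gg_diag (i : ℕ) : gg i i = if i = 0 then X - 1 else X - 2 := by simp [gg]

lemma gg_adj {i j : ℕ} (h : i + 1 = j ∨ j + 1 = i) : gg i j = 1 := by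
  have h' : i ≠ j := by omega
  simp [gg, h', h]

lemma gg_far {i j : ℕ} (h1 : i ≠ j) (h2 : ¬(i + 1 = j ∨ j + 1 = i)) : gg i j = 0 := by
  simp [gg, h1, h2]

lemma succAbove_val (n : ℕ) (p : Fin (n+1)) (j : Fin n) :
    ((p.succAbove j : Fin (n+1)) : ℕ) = if j.val < p.val then j.val else j.val + 1 := by
  rw [Fin.succAbove]
  split
  · simp_all [Fin.lt_def]
  · next h => rw [if_neg (by simpa [Fin.lt_def] using h), Fin.val_succ]

lemma minor_det (n : ℕ) :
    ((Qmat (n+2)).submatrix (Fin.last (n+1)).succAbove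
      (Fin.succAbove ⟨n, by omega⟩)).det = qq n := by
  set N := (Qmat (n+2)).submatrix (Fin.last (n+1)).succAbove
      (Fin.succAbove (⟨n, by omega⟩ : Fin (n+2))) with hN
  have hNentry : ∀ (i : Fin (n+1)) (j : Fin (n+1)),
      N i j = gg i.val (if j.val < n then j.val else j.val + 1) := by
    intro i j
    simp only [hN, Matrix.submatrix_apply, Qmat, Matrix.of_apply, Fin.succAbove_last]
    rw [succAbove_val, Fin.coe_castSucc]
  rw [Matrix.det_succ_column N (Fin.last n)]
  rw [Fintype.sum_eq_single (Fin.last n) ?_]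
  · have h1 : N (Fin.last n) (Fin.last n) = 1 := by
      rw [hNentry]
      simp only [Fin.val_last, if_neg (lt_irrefl n)]
      exact gg_adj (by omega)
    have h2 : N.submatrix (Fin.last n).succAbove (Fin.last n).succAbove = Qmat n := by
      ext i j
      simp only [Matrix.submatrix_apply, Fin.succAbove_last]
      rw [hNentry]
      simp only [Fin.coe_castSucc, Qmat, Matrix.of_apply]
      rw [if_pos (by omega)]
    rw [h1, h2]
    have : ((-1 : ℝ[X]) ^ ((Fin.last n : ℕ) + (Fin.last n : ℕ))) = 1 :=
      Even.neg_one_pow ⟨(Fin.last n : ℕ), by ring⟩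
    rw [this, qq]
    ring
  · intro x hx
    have hxv : x.val ≠ n := fun h => hx (Fin.ext (by simpa using h))
    have : N x (Fin.last n) = 0 := by
      rw [hNentry]
      simp only [Fin.val_last, if_neg (lt_irrefl n)]
      exact gg_far (by omega) (by omega)
    rw [this]
    ring

lemma qq_rec (n : ℕ) : qq (n+2) = (X - 2) * qq (n+1) - qq n := by
  rw [show qq (n+2) = (Qmat (n+2)).det from rfl,
    Matrix.det_succ_row (Qmat (n+2)) (Fin.last (n+1))]
  rw [Fintype.sum_eq_add (Fin.last (n+1)) (⟨n, by omega⟩ : Fin (n+2))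
    (by simp [Fin.ext_iff]) ?_]
  · have e1 : Qmat (n+2) (Fin.last (n+1)) (Fin.last (n+1)) = X - 2 := by
      simp only [Qmat, Matrix.of_apply, Fin.val_last, gg_diag]
      rw [if_neg (by omega)]
    have e2 : Qmat (n+2) (Fin.last (n+1)) ⟨n, by omega⟩ = 1 := by
      simp only [Qmat, Matrix.of_apply, Fin.val_last]
      exact gg_adj (by omega)
    have s1 : ((-1 : ℝ[X]) ^ ((Fin.last (n+1) : ℕ) + (Fin.last (n+1) : ℕ))) = 1 :=
      Even.neg_one_pow ⟨(Fin.last (n+1) : ℕ), by ring⟩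
    have s2 : ((-1 : ℝ[X]) ^ ((Fin.last (n+1) : ℕ) + ((⟨n, by omega⟩ : Fin (n+2)) : ℕ))) = -1 :=
      Odd.neg_one_pow ⟨n, by simp [Fin.val_last]; ring⟩
    rw [e1, e2, s1, s2, submatrix_last_last, minor_det]
    rw [show (Qmat (n+1)).det = qq (n+1) from rfl]
    ring
  · intro x ⟨hxa, hxb⟩
    have h1 : x.val ≠ n + 1 := fun h => hxa (Fin.ext (by simpa using h))
    have h2 : x.val ≠ n := fun h => hxb (Fin.ext (by simpa using h))
    have : Qmat (n+2) (Fin.last (n+1)) x = 0 := by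
      simp only [Qmat, Matrix.of_apply, Fin.val_last]
      exact gg_far (by omega) (by omega)
    rw [this]
    ring

lemma uu_zero : uu 0 = 1 := by simp [uu, Polynomial.Chebyshev.U_zero]

lemma uu_neg_one : uu (-1) = 0 := by simp [uu, Polynomial.Chebyshev.U_neg_one]

lemma uu_one : uu 1 = X - 2 := by
  rw [uu, Polynomial.Chebyshev.U_one, mul_comp, ofNat_comp, X_comp]
  rw [show ((2:ℕ):ℝ[X]) = 2 from by norm_num, two_mul_arg]

lemma qq_eq (n : ℕ) : qq n = uu n + uu ((n : ℤ) - 1) := by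
  induction n using Nat.twoStepInduction with
  | zero => rw [qq_zero]; norm_num [uu_zero, uu_neg_one]
  | one => rw [qq_one]; norm_num [uu_one, uu_zero]; ring
  | more n ih1 ih2 =>
    have i1 : ((n + 2 : ℕ) : ℤ) = (n : ℤ) + 2 := by push_cast; ring
    have i1' : ((n + 1 : ℕ) : ℤ) = (n : ℤ) + 1 := by push_cast; ring
    rw [qq_rec, ih1, ih2, i1, i1']
    have i2 : ((n : ℤ) + 2) - 1 = (n : ℤ) + 1 := by ring
    have i3 : ((n : ℤ) + 1) - 1 = (n : ℤ) := by ring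
    rw [i2, i3]
    have r1 := uu_rec (n : ℤ)
    have r2 := uu_rec ((n : ℤ) - 1)
    have e1 : ((n : ℤ) - 1) + 2 = (n : ℤ) + 1 := by ring
    have e2 : ((n : ℤ) - 1) + 1 = (n : ℤ) := by ring
    rw [e1, e2] at r2
    linear_combination -r1 - r2

lemma det_update_single (n : ℕ) :
    ((Qmat (n+1)).updateCol (Fin.last n) (Pi.single (Fin.last n) 1)).det = qq n := by
  rw [Matrix.det_succ_column _ (Fin.last n)]
  rw [Fintype.sum_eq_single (Fin.last n) ?_]
  · have h1 : (Qmat (n+1)).updateCol (Fin.last n) (Pi.single (Fin.last n) 1)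
        (Fin.last n) (Fin.last n) = 1 := by
      rw [Matrix.updateCol_apply, if_pos rfl, Pi.single_eq_same]
    have h2 : ((Qmat (n+1)).updateCol (Fin.last n)
        (Pi.single (Fin.last n) 1)).submatrix (Fin.last n).succAbove (Fin.last n).succAbove
        = Qmat n := by
      ext i j
      simp only [Matrix.submatrix_apply, Fin.succAbove_last, Matrix.updateCol_apply,
        if_neg (Fin.castSucc_lt_last j).ne, Qmat, Matrix.of_apply, Fin.coe_castSucc]
    rw [h1, h2]
    have : ((-1 : ℝ[X]) ^ ((Fin.last n : ℕ) + (Fin.last n : ℕ))) = 1 :=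
      Even.neg_one_pow ⟨(Fin.last n : ℕ), by ring⟩
    rw [this, qq]
    ring
  · intro x hx
    rw [Matrix.updateCol_apply, if_pos rfl, Pi.single_eq_of_ne hx]
    ring

lemma pathGraph_degree (k : ℕ) (i : Fin (k+1)) [DecidableRel (SimpleGraph.pathGraph (k+1)).Adj] :
    (SimpleGraph.pathGraph (k+1)).degree i
      = (if i.val = k then 0 else 1) + (if i.val = 0 then 0 else 1) := by
  rw [← SimpleGraph.card_neighborFinset_eq_degree, SimpleGraph.neighborFinset_eq_filter,
    Finset.card_filter]
  have key : ∀ j : Fin (k+1), (if (SimpleGraph.pathGraph (k+1)).Adj i j then 1 else 0)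
      = (fun t : ℕ => (if i.val + 1 = t then 1 else 0) + (if t + 1 = i.val then 1 else 0))
        j.val := by
    intro j
    by_cases h : (SimpleGraph.pathGraph (k+1)).Adj i j
    · rw [if_pos h]
      rcases SimpleGraph.pathGraph_adj.mp h with h1 | h1
      · simp only []
        rw [if_pos h1, if_neg (by omega)]
      · simp only []
        rw [if_neg (by omega), if_pos h1]
    · rw [if_neg h]
      rw [SimpleGraph.pathGraph_adj] at h
      push_neg at h
      simp only []
      rw [if_neg h.1, if_neg h.2]
  rw [Finset.sum_congr rfl (fun j _ => key j),
    Fin.sum_univ_eq_sum_range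
      (fun t : ℕ => ((if i.val + 1 = t then 1 else 0) + (if t + 1 = i.val then 1 else 0) : ℕ))
      (k+1),
    Finset.sum_add_distrib]
  have hi := i.isLt
  congr 1
  · have h' : ∀ t, ((if i.val + 1 = t then 1 else 0) : ℕ) = if t = i.val + 1 then 1 else 0 := by
      intro t
      by_cases h : i.val + 1 = t
      · rw [if_pos h, if_pos h.symm]
      · rw [if_neg h, if_neg (fun hh => h hh.symm)]
    rw [Finset.sum_congr rfl (fun t _ => h' t), Finset.sum_ite_eq']
    by_cases h : i.val = k
    · rw [if_neg (by simp; omega), if_pos h]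
    · rw [if_pos (by simp; omega), if_neg h]
  · by_cases h0 : i.val = 0
    · rw [if_pos h0, Finset.sum_eq_zero]
      intro t _
      rw [if_neg (by omega)]
    · obtain ⟨s, hs⟩ : ∃ s, i.val = s + 1 := ⟨i.val - 1, by omega⟩
      have h' : ∀ t, ((if t + 1 = i.val then 1 else 0) : ℕ) = if t = s then 1 else 0 := by
        intro t
        by_cases h : t = s
        · rw [if_pos (by omega), if_pos h]
        · rw [if_neg (by omega), if_neg h]
      rw [Finset.sum_congr rfl (fun t _ => h' t), Finset.sum_ite_eq',
        if_pos (by simp; omega), if_neg h0]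

lemma lap_diag (k : ℕ) [DecidableRel (SimpleGraph.pathGraph (k+1)).Adj] (i : Fin (k+1)) :
    (SimpleGraph.pathGraph (k+1)).lapMatrix ℝ i i
      = (((if i.val = k then 0 else 1) + (if i.val = 0 then 0 else 1) : ℕ) : ℝ) := by
  simp [SimpleGraph.lapMatrix, SimpleGraph.degMatrix, Matrix.sub_apply,
    Matrix.diagonal_apply_eq, pathGraph_degree]

lemma lap_offdiag (k : ℕ) [DecidableRel (SimpleGraph.pathGraph (k+1)).Adj]
    (i j : Fin (k+1)) (h : i ≠ j) :
    (SimpleGraph.pathGraph (k+1)).lapMatrix ℝ i j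
      = -(if (SimpleGraph.pathGraph (k+1)).Adj i j then (1:ℝ) else 0) := by
  simp [SimpleGraph.lapMatrix, SimpleGraph.degMatrix, Matrix.sub_apply,
    Matrix.diagonal_apply_ne _ h, SimpleGraph.adjMatrix_apply]

lemma charmatrix_eq (k : ℕ) [DecidableRel (SimpleGraph.pathGraph (k+1)).Adj] :
    ((SimpleGraph.pathGraph (k+1)).lapMatrix ℝ).charmatrix
      = (Qmat (k+1)).updateCol (Fin.last k)
          ((fun i => Qmat (k+1) i (Fin.last k)) + Pi.single (Fin.last k) 1) := by
  ext i j
  by_cases hj : j = Fin.last k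
  · subst hj
    rw [Matrix.updateCol_apply, if_pos rfl, Pi.add_apply]
    by_cases hi : i = Fin.last k
    · subst hi
      rw [Matrix.charmatrix_apply_eq, lap_diag, Pi.single_eq_same]
      simp only [Qmat, Matrix.of_apply, Fin.val_last, if_pos rfl, gg_diag]
      by_cases hk : k = 0
      · rw [if_pos hk, if_pos hk]
        norm_num
      · rw [if_neg hk, if_neg hk]
        push_cast
        simp only [_root_.map_one, _root_.map_ofNat]
        try ring
    · have hiv : i.val ≠ k := fun h => hi (Fin.ext (by simpa using h))
      rw [Matrix.charmatrix_apply_ne _ _ _ hi, lap_offdiag _ _ _ hi,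
        Pi.single_eq_of_ne hi]
      simp only [Qmat, Matrix.of_apply, Fin.val_last, add_zero]
      by_cases ha : (SimpleGraph.pathGraph (k+1)).Adj i (Fin.last k)
      · have := SimpleGraph.pathGraph_adj.mp ha
        simp only [Fin.val_last] at this
        rw [if_pos ha, gg_adj (by omega)]
        norm_num
      · have hna := ha
        rw [SimpleGraph.pathGraph_adj] at hna
        push_neg at hna
        simp only [Fin.val_last] at hna
        rw [if_neg ha, gg_far (by omega) (by omega)]
        norm_num
  · have hjv : j.val ≠ k := fun h => hj (Fin.ext (by simpa using h))
    rw [Matrix.updateCol_apply, if_neg hj]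
    by_cases hij : i = j
    · subst hij
      rw [Matrix.charmatrix_apply_eq, lap_diag]
      simp only [Qmat, Matrix.of_apply, gg_diag, if_neg hjv]
      by_cases h0 : i.val = 0
      · rw [if_pos h0, if_pos h0]
        norm_num
      · rw [if_neg h0, if_neg h0]
        push_cast
        simp only [_root_.map_one, _root_.map_ofNat]
        try ring
    · have hijv : i.val ≠ j.val := fun h => hij (Fin.ext h)
      rw [Matrix.charmatrix_apply_ne _ _ _ hij, lap_offdiag _ _ _ hij]
      simp only [Qmat, Matrix.of_apply]
      by_cases ha : (SimpleGraph.pathGraph (k+1)).Adj i j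
      · have := SimpleGraph.pathGraph_adj.mp ha
        rw [if_pos ha, gg_adj (by omega)]
        norm_num
      · have hna := ha
        rw [SimpleGraph.pathGraph_adj] at hna
        push_neg at hna
        rw [if_neg ha, gg_far (by omega) (by omega)]
        norm_num


/-- For `m ≥ 1`, the characteristic polynomial of the Laplacian matrix of the path graph
on `m` vertices equals `x · U_{m−1}(x/2 − 1)` where `U` is the Chebyshev polynomial of
the second kind. -/
theorem charpoly_lapMatrix_pathGraph_chebyshev (m : ℕ) (hm : 1 ≤ m)
    [DecidableRel (SimpleGraph.pathGraph m).Adj] :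
    ((SimpleGraph.pathGraph m).lapMatrix ℝ).charpoly =
      X * (Polynomial.Chebyshev.U ℝ ((m : ℤ) - 1)).comp
        (Polynomial.C (2 : ℝ)⁻¹ * X - 1) := by
  obtain ⟨k, rfl⟩ : ∃ k, m = k + 1 := ⟨m - 1, by omega⟩
  rw [Matrix.charpoly, charmatrix_eq, Matrix.det_updateCol_add]
  have h1 : ((Qmat (k+1)).updateCol (Fin.last k) fun i => Qmat (k+1) i (Fin.last k)).det
      = qq (k+1) := by rw [Matrix.updateCol_eq_self]; rfl
  rw [h1, det_update_single, qq_eq, qq_eq]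
  show _ = X * uu (((k+1 : ℕ) : ℤ) - 1)
  have i1 : ((k + 1 : ℕ) : ℤ) = (k : ℤ) + 1 := by push_cast; ring
  have i2 : ((k : ℤ) + 1) - 1 = (k : ℤ) := by ring
  rw [i1, i2]
  have r := uu_rec ((k : ℤ) - 1)
  have e1 : ((k : ℤ) - 1) + 2 = (k : ℤ) + 1 := by ring
  have e2 : ((k : ℤ) - 1) + 1 = (k : ℤ) := by ring
  rw [e1, e2] at r
  linear_combination r
end

section
/- Let Γ = Cay(G, S) be a Cayley graph on a finite group G, and let Δ be a graph such that the vertex set of Γ is partitioned by the vertex sets of induced copies Δ_0, …, Δ_k of Δ and Γ contains no other induced copies of Δ. Then the vertex sets of these copies are exactly the right cosets of a subgroup of G. -/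
/-- Right translation gives an isomorphism between induced subgraphs of a Cayley graph. -/
lemma cayley_translate_iso
    {G : Type*} [Group G] (S : Set G)
    (Γ : SimpleGraph G) (hΓ : ∀ u v : G, Γ.Adj u v ↔ u ≠ v ∧ v * u⁻¹ ∈ S)
    (A : Set G) (t : G) :
    Nonempty ((Γ.induce A) ≃g (Γ.induce ((fun h => h * t) '' A))) := by
  have hinj : Function.Injective (fun h : G => h * t) := fun a b h => by
    simpa using mul_right_cancel h
  refine ⟨⟨Equiv.Set.image (fun h : G => h * t) A hinj, ?_⟩⟩
  rintro ⟨a, ha⟩ ⟨b, hb⟩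
  simp only [SimpleGraph.comap_adj, Function.Embedding.coe_subtype, Equiv.Set.image_apply]
  simp [hΓ, mul_assoc, hinj.ne_iff]

/-- Let `Γ = Cay(G,S)` be a Cayley graph on a finite group `G`, and suppose the vertex
set of `Γ` is partitioned by the vertex sets of induced copies of a graph `Δ`, and that
`Γ` contains no other induced copies of `Δ`. Then the vertex sets of these copies are
exactly the right cosets of a subgroup of `G`. -/
theorem cayley_strongly_partitioned_cosets
    {G : Type*} [Group G] [Fintype G] (S : Set G)
    (hone : (1 : G) ∉ S) (hsymm : ∀ s ∈ S, s⁻¹ ∈ S)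
    (Γ : SimpleGraph G) (hΓ : ∀ u v : G, Γ.Adj u v ↔ u ≠ v ∧ v * u⁻¹ ∈ S)
    {W : Type*} (Δ : SimpleGraph W)
    (P : Set (Set G))
    (hpart : ∀ g : G, ∃! A, A ∈ P ∧ g ∈ A)
    (hcopies : ∀ A : Set G, A ∈ P ↔ Nonempty ((Γ.induce A) ≃g Δ)) :
    ∃ H : Subgroup G, P = Set.range (fun g : G => (fun h => h * g) '' (H : Set G)) := by
  classical
  obtain ⟨A₀, ⟨hA₀P, hA₀1⟩, huniq⟩ := hpart 1
  -- translates of members of P are in P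
  have htrans : ∀ A ∈ P, ∀ t : G, (fun h => h * t) '' A ∈ P := by
    intro A hA t
    rw [hcopies] at hA ⊢
    obtain ⟨e⟩ := hA
    obtain ⟨f⟩ := cayley_translate_iso S Γ hΓ A t
    exact ⟨f.symm.trans e⟩
  -- A₀ is closed under x ↦ x * a⁻¹ for a ∈ A₀
  have hdiv : ∀ a ∈ A₀, ∀ b ∈ A₀, b * a⁻¹ ∈ A₀ := by
    intro a ha b hb
    have hmem : (fun h => h * a⁻¹) '' A₀ ∈ P := htrans A₀ hA₀P a⁻¹
    have h1 : (1 : G) ∈ (fun h => h * a⁻¹) '' A₀ := ⟨a, ha, mul_inv_cancel a⟩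
    have := huniq _ ⟨hmem, h1⟩
    rw [← this]
    exact ⟨b, hb, rfl⟩
  have hinv : ∀ a ∈ A₀, a⁻¹ ∈ A₀ := fun a ha => by
    simpa using hdiv a ha 1 hA₀1
  refine ⟨{ carrier := A₀
            one_mem' := hA₀1
            inv_mem' := fun {a} ha => hinv a ha
            mul_mem' := fun {a b} ha hb => by
              simpa using hdiv b⁻¹ (hinv b hb) a ha }, ?_⟩
  ext A
  simp only [Set.mem_range]
  constructor
  · intro hA
    -- A is nonempty
    obtain ⟨e⟩ := (hcopies A).mp hA
    obtain ⟨e₀⟩ := (hcopies A₀).mp hA₀P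
    obtain ⟨g, hg⟩ : A.Nonempty := ⟨(e.symm (e₀ ⟨1, hA₀1⟩)).1, (e.symm (e₀ ⟨1, hA₀1⟩)).2⟩
    refine ⟨g, ?_⟩
    have hmem : (fun h => h * g) '' A₀ ∈ P := htrans A₀ hA₀P g
    have hgmem : g ∈ (fun h => h * g) '' A₀ := ⟨1, hA₀1, one_mul g⟩
    obtain ⟨B, _, hBuniq⟩ := hpart g
    have h1 := hBuniq _ ⟨hmem, hgmem⟩
    have h2 := hBuniq _ ⟨hA, hg⟩
    show (fun h => h * g) '' A₀ = A
    rw [h1, h2]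
  · rintro ⟨g, rfl⟩
    exact htrans A₀ hA₀P g
end

section
/- Let G be a finite group and H a subgroup such that H ∩ H^c = {1} for some involution c ∈ G \ H, and suppose G = H ∪ ⋃_{h∈H} Hch (disjoint union). Then H ∩ H^g = {1} for every g ∈ G \ H, i.e., G is a Frobenius group with complement H. -/
/-- Let `G` be a finite group, `H` a subgroup, and `c ∈ G \ H` an involution with
`H ∩ H^c = {1}`. If `G = H ∪ ⋃_{h ∈ H} Hch` is a disjoint union, then `H ∩ H^g = {1}`
for every `g ∈ G \ H`, i.e. `G` is a Frobenius group with complement `H`. -/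
theorem frobenius_of_disjoint_cover {G : Type*} [Group G] [Fintype G]
    (H : Subgroup G) (c : G) (hcH : c ∉ H) (hc2 : c ^ 2 = 1) (hc1 : c ≠ 1)
    (hint : ∀ x : G, x ∈ H → c⁻¹ * x * c ∈ H → x = 1)
    (hcover : ∀ g : G, g ∈ H ∨ ∃ h ∈ H, g ∈ (fun y => y * (c * h)) '' (H : Set G))
    (hdisj1 : ∀ h ∈ H, Disjoint (H : Set G) ((fun y => y * (c * h)) '' (H : Set G)))
    (hdisj2 : ∀ h ∈ H, ∀ h' ∈ H, h ≠ h' →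
      Disjoint ((fun y => y * (c * h)) '' (H : Set G))
        ((fun y => y * (c * h')) '' (H : Set G))) :
    ∀ g : G, g ∉ H → ∀ x : G, x ∈ H → g⁻¹ * x * g ∈ H → x = 1 := by
  intro g hg x hx hgx
  rcases hcover g with h1 | ⟨h, hh, y, hy, hyg⟩
  · exact absurd h1 hg
  · simp only at hyg
    subst hyg
    have hxy : y⁻¹ * x * y ∈ H := H.mul_mem (H.mul_mem (H.inv_mem hy) hx) hy
    have hconj : c⁻¹ * (y⁻¹ * x * y) * c ∈ H := by
      have hm := H.mul_mem (H.mul_mem hh hgx) (H.inv_mem hh)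
      have : h * ((y * (c * h))⁻¹ * x * (y * (c * h))) * h⁻¹
          = c⁻¹ * (y⁻¹ * x * y) * c := by group
      rwa [this] at hm
    have h1 := hint _ hxy hconj
    have : x = y * (y⁻¹ * x * y) * y⁻¹ := by group
    rw [this, h1, mul_one, mul_inv_cancel]
end
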